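/- (Main theorem) Let Ω be a countable set, H = (ℓ²(Ω))^N, A : H → (ℓ²(Ω))^m bounded linear acting row-block-wise with 0 < τ < 2/‖A*A‖, φ₁(x) = Σ_{j=1}^N ‖x_j‖₂, φ₂(x) = ½‖Ax − u‖². Then for any x^0 ∈ H, the forward–backward iterates x^{k+1} = J_τ(x^k − τA*(Ax^k − u)) converge strongly (in norm) to a minimizer x* of φ₁ + φ₂, assuming minimizers exist. -/

import Mathlib

/-!
The minimizer `x*` is a fixed point of the forward–backward map; row-wise soft thresholding is
firmly nonexpansive and the gradient step `I - τA*A` is nonexpansive. Hence `‖x^k - x*‖`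
decreases to some `β`, the norm of `v^k = (I - τA*A)(x^k - x*)` also tends to `β`, and the residual
`J_τ(w + v^k) - J_τ(w) - v^k` tends to zero, where `w = x* - τA*(Ax* - u)`. On a row with
`‖w_j‖ < τ` the residual dominates `min(‖v^k_j‖, τ - ‖w_j‖)`; on a row with `‖w_j‖ ≥ τ`
it controls `‖v^k_j‖` up to the cross term `⟪w_j, v^k_j⟫`, which vanishes because `v^k ⇀ 0`.
There are finitely many rows, so `v^k → 0` in norm and `β = 0`.
-/

open Filter
open scoped RealInnerProductSpace

variable {H0 : Type*} [NormedAddCommGroup H0] [InnerProductSpace ℝ H0] [CompleteSpace H0]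

instance {n : ℕ} : CompleteSpace (PiLp 2 (fun _ : Fin n => H0)) :=
  inferInstance

-- At `a = 0` the junk value `0 / 0 = 0` gives the correct value `0`.
noncomputable def softThreshold {E : Type*} [NormedAddCommGroup E] [InnerProductSpace ℝ E]
    (τ : ℝ) (a : E) : E :=
  (max (‖a‖ - τ) 0 / ‖a‖) • a

section SoftThreshold

variable {E : Type*} [NormedAddCommGroup E] [InnerProductSpace ℝ E] {τ : ℝ}

lemma norm_softThreshold (hτ : 0 ≤ τ) (a : E) : ‖softThreshold τ a‖ = max (‖a‖ - τ) 0 := by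
  rcases eq_or_ne a 0 with rfl | ha
  · simp [softThreshold, hτ]
  · rw [softThreshold, norm_smul, Real.norm_eq_abs, abs_of_nonneg (by positivity),
      div_mul_cancel₀ _ (norm_ne_zero_iff.mpr ha)]

lemma softThreshold_of_norm_le {a : E} (h : ‖a‖ ≤ τ) : softThreshold τ a = 0 := by
  rw [softThreshold, max_eq_right (by linarith), zero_div, zero_smul]

lemma softThreshold_of_le_norm {a : E} (h : τ ≤ ‖a‖) :
    softThreshold τ a = (1 - τ / ‖a‖) • a := by
  rcases eq_or_ne a 0 with rfl | ha
  · simp [softThreshold]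
  · have : ‖a‖ ≠ 0 := norm_ne_zero_iff.mpr ha
    rw [softThreshold, max_eq_left (by linarith)]
    field_simp

/-- `a - softThreshold τ a` is a subgradient of `τ‖·‖` at `softThreshold τ a`. -/
lemma inner_sub_softThreshold_le (hτ : 0 ≤ τ) (a b : E) :
    ⟪a - softThreshold τ a, b - softThreshold τ a⟫ ≤ τ * ‖b‖ - τ * ‖softThreshold τ a‖ := by
  have hab : ⟪a, b⟫ ≤ ‖a‖ * ‖b‖ := real_inner_le_norm a b
  rcases le_or_gt ‖a‖ τ with h | h
  · rw [softThreshold_of_norm_le h]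
    simp only [sub_zero, norm_zero, mul_zero]
    nlinarith [norm_nonneg a, norm_nonneg b]
  · have ha : 0 < ‖a‖ := hτ.trans_lt h
    rw [norm_softThreshold hτ, max_eq_left (by linarith), softThreshold_of_le_norm h.le]
    set c := τ / ‖a‖
    have hc : 0 ≤ c := by positivity
    have hca : c * ‖a‖ = τ := div_mul_cancel₀ τ ha.ne'
    have hsub : a - (1 - c) • a = c • a := by rw [sub_smul, one_smul, sub_sub_cancel]
    rw [hsub, inner_sub_right, real_inner_smul_left, real_inner_smul_left, real_inner_smul_right,
      real_inner_self_eq_norm_sq]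
    have e1 : c * ((1 - c) * ‖a‖ ^ 2) = τ * (‖a‖ - τ) := by rw [← hca]; ring
    have e2 : c * (‖a‖ * ‖b‖) = τ * ‖b‖ := by rw [← hca]; ring
    linarith [mul_le_mul_of_nonneg_left hab hc]

lemma norm_softThreshold_sub_sq_le_inner (hτ : 0 ≤ τ) (a b : E) :
    ‖softThreshold τ a - softThreshold τ b‖ ^ 2 ≤
      ⟪softThreshold τ a - softThreshold τ b, a - b⟫ := by
  have ha := inner_sub_softThreshold_le hτ a (softThreshold τ b)
  have hb := inner_sub_softThreshold_le hτ b (softThreshold τ a)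
  rw [← real_inner_self_eq_norm_sq]
  simp only [inner_sub_left, inner_sub_right, real_inner_comm a, real_inner_comm b,
    real_inner_comm (softThreshold τ a) (softThreshold τ b)] at ha hb ⊢
  linarith

lemma softThreshold_prox_le (hτ : 0 ≤ τ) (a b : E) :
    τ * ‖softThreshold τ a‖ + ‖softThreshold τ a - a‖ ^ 2 / 2 + ‖b - softThreshold τ a‖ ^ 2 / 2
      ≤ τ * ‖b‖ + ‖b - a‖ ^ 2 / 2 := by
  have h := inner_sub_softThreshold_le hτ a b
  have hexp : ‖b - a‖ ^ 2 = ‖b - softThreshold τ a‖ ^ 2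
      - 2 * ⟪a - softThreshold τ a, b - softThreshold τ a⟫ + ‖softThreshold τ a - a‖ ^ 2 := by
    rw [show b - a = (b - softThreshold τ a) - (a - softThreshold τ a) by abel,
      norm_sub_sq_real, real_inner_comm, norm_sub_rev a]
  linarith

lemma min_le_norm_softThreshold_residual {w : E} (hw : ‖w‖ < τ) (v : E) :
    min ‖v‖ (τ - ‖w‖) ≤ ‖softThreshold τ (w + v) - softThreshold τ w - v‖ := by
  rw [softThreshold_of_norm_le hw.le, sub_zero]
  rcases le_or_gt ‖w + v‖ τ with h | h
  · rw [softThreshold_of_norm_le h, zero_sub, norm_neg]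
    exact min_le_left _ _
  · have hS : ‖softThreshold τ (w + v)‖ = ‖w + v‖ - τ := by
      rw [norm_softThreshold (by linarith [norm_nonneg w]), max_eq_left (by linarith)]
    have := norm_sub_norm_le v (softThreshold τ (w + v))
    rw [norm_sub_rev] at this
    linarith [min_le_right ‖v‖ (τ - ‖w‖), norm_add_le w v]

lemma sq_mul_sq_norm_le_softThreshold_residual (hτ : 0 < τ) {w : E} (hw : τ ≤ ‖w‖) (v : E) :
    τ ^ 2 * ‖v‖ ^ 2 ≤ (‖w‖ + ‖v‖) ^ 2 *
      (‖softThreshold τ (w + v) - softThreshold τ w - v‖ ^ 2 + 2 * |⟪w, v⟫|) := by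
  have hτw : τ ^ 2 ≤ (‖w‖ + ‖v‖) ^ 2 := by gcongr; linarith [norm_nonneg v]
  have hexp : ‖w + v‖ ^ 2 = ‖w‖ ^ 2 + 2 * ⟪w, v⟫ + ‖v‖ ^ 2 := norm_add_sq_real w v
  have hwv : -|⟪w, v⟫| ≤ ⟪w, v⟫ := neg_abs_le _
  rcases le_or_gt ‖w + v‖ τ with h | h
  · have hv : ‖v‖ ^ 2 ≤ 2 * |⟪w, v⟫| := by
      nlinarith [pow_le_pow_left₀ (norm_nonneg _) h 2, pow_le_pow_left₀ hτ.le hw 2]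
    calc τ ^ 2 * ‖v‖ ^ 2 ≤ (‖w‖ + ‖v‖) ^ 2 * (2 * |⟪w, v⟫|) :=
          mul_le_mul hτw hv (sq_nonneg _) (sq_nonneg _)
      _ ≤ _ := by gcongr; linarith [sq_nonneg ‖softThreshold τ (w + v) - softThreshold τ w - v‖]
  · set r := ‖w + v‖
    have hr : 0 < r := hτ.trans h
    have hw0 : 0 < ‖w‖ := hτ.trans_le hw
    set ρ := τ / r
    set α := τ / ‖w‖ - ρ
    have hρ0 : 0 < ρ := by positivity
    have hρ1 : ρ < 1 := (div_lt_one hr).mpr h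
    have hαρ : |α * ρ| ≤ 1 := by
      have : τ / ‖w‖ ≤ 1 := (div_le_one hw0).mpr hw
      have : 0 < τ / ‖w‖ := by positivity
      rw [abs_mul, abs_of_pos hρ0]
      exact mul_le_one₀ (abs_le.mpr ⟨by linarith, by linarith⟩) hρ0.le hρ1.le
    have hres : softThreshold τ (w + v) - softThreshold τ w - v = α • w - ρ • v := by
      rw [softThreshold_of_le_norm h.le, softThreshold_of_le_norm hw]
      module
    have hρv : ρ ^ 2 * ‖v‖ ^ 2 ≤
        ‖softThreshold τ (w + v) - softThreshold τ w - v‖ ^ 2 + 2 * |⟪w, v⟫| := by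
      have hcross : α * ρ * ⟪w, v⟫ ≤ |⟪w, v⟫| := by
        calc α * ρ * ⟪w, v⟫ ≤ |α * ρ| * |⟪w, v⟫| := by rw [← abs_mul]; exact le_abs_self _
          _ ≤ |⟪w, v⟫| := mul_le_of_le_one_left (abs_nonneg _) hαρ
      rw [hres, norm_sub_sq_real, norm_smul, norm_smul, real_inner_smul_left,
        real_inner_smul_right, mul_pow, mul_pow, Real.norm_eq_abs, Real.norm_eq_abs, sq_abs,
        sq_abs]
      nlinarith [mul_nonneg (sq_nonneg α) (sq_nonneg ‖w‖)]
    have hrτ : r ^ 2 * ρ ^ 2 = τ ^ 2 := by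
      simp only [ρ]; field_simp
    calc τ ^ 2 * ‖v‖ ^ 2 = r ^ 2 * (ρ ^ 2 * ‖v‖ ^ 2) := by rw [← hrτ]; ring
      _ ≤ r ^ 2 * (‖softThreshold τ (w + v) - softThreshold τ w - v‖ ^ 2 + 2 * |⟪w, v⟫|) := by
          gcongr
      _ ≤ _ := by gcongr; exact norm_add_le w v

lemma tendsto_zero_of_tendsto_softThreshold_residual (hτ : 0 < τ) (w : E) {v : ℕ → E} {M : ℝ}
    (hM : ∀ k, ‖v k‖ ≤ M) (hweak : Tendsto (fun k => ⟪w, v k⟫) atTop (nhds 0))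
    (hres : Tendsto (fun k => softThreshold τ (w + v k) - softThreshold τ w - v k) atTop
      (nhds 0)) :
    Tendsto v atTop (nhds 0) := by
  rw [tendsto_zero_iff_norm_tendsto_zero]
  replace hres := tendsto_zero_iff_norm_tendsto_zero.mp hres
  rcases lt_or_ge ‖w‖ τ with hw | hw
  · have hmin : Tendsto (fun k => min ‖v k‖ (τ - ‖w‖)) atTop (nhds 0) :=
      squeeze_zero (fun k => le_min (norm_nonneg _) (by linarith))
        (fun k => min_le_norm_softThreshold_residual hw (v k)) hres
    refine hmin.congr' ?_
    filter_upwards [hmin.eventually (gt_mem_nhds (sub_pos.mpr hw))] with k hk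
    exact min_eq_left (min_lt_iff.mp hk |>.resolve_right (lt_irrefl _)).le
  · have hbound : ∀ k, ‖v k‖ ^ 2 ≤ ((‖w‖ + M) / τ) ^ 2 *
        (‖softThreshold τ (w + v k) - softThreshold τ w - v k‖ ^ 2 + 2 * |⟪w, v k⟫|) := by
      intro k
      have h := sq_mul_sq_norm_le_softThreshold_residual hτ hw (v k)
      have hwM : (‖w‖ + ‖v k‖) ^ 2 ≤ (‖w‖ + M) ^ 2 := by gcongr; exact hM k
      rw [div_pow, div_mul_eq_mul_div, le_div_iff₀ (by positivity), mul_comm]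
      exact h.trans (mul_le_mul_of_nonneg_right hwM (by positivity))
    have hlim : Tendsto (fun k => ((‖w‖ + M) / τ) ^ 2 *
        (‖softThreshold τ (w + v k) - softThreshold τ w - v k‖ ^ 2 + 2 * |⟪w, v k⟫|))
        atTop (nhds 0) := by
      simpa using ((hres.pow 2).add (hweak.abs.const_mul 2)).const_mul (((‖w‖ + M) / τ) ^ 2)
    simpa using (squeeze_zero (fun k => sq_nonneg _) hbound hlim).sqrt

end SoftThreshold

-- The operator `J_τ`.
noncomputable def rowSoftThreshold {ι E : Type*} [NormedAddCommGroup E] [InnerProductSpace ℝ E]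
    (τ : ℝ) (y : PiLp 2 (fun _ : ι => E)) : PiLp 2 (fun _ : ι => E) :=
  WithLp.toLp 2 fun j => softThreshold τ (y j)

section RowSoftThreshold

variable {ι E : Type*} [NormedAddCommGroup E] [InnerProductSpace ℝ E] {τ : ℝ}

@[simp]
lemma rowSoftThreshold_apply (y : PiLp 2 (fun _ : ι => E)) (j : ι) :
    rowSoftThreshold τ y j = softThreshold τ (y j) :=
  rfl

variable [Fintype ι]

lemma norm_rowSoftThreshold_sub_sq_le_inner (hτ : 0 ≤ τ) (a b : PiLp 2 (fun _ : ι => E)) :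
    ‖rowSoftThreshold τ a - rowSoftThreshold τ b‖ ^ 2 ≤
      ⟪rowSoftThreshold τ a - rowSoftThreshold τ b, a - b⟫ := by
  rw [PiLp.norm_sq_eq_of_L2, PiLp.inner_apply]
  exact Finset.sum_le_sum fun j _ => norm_softThreshold_sub_sq_le_inner hτ (a j) (b j)

lemma rowSoftThreshold_prox_le (hτ : 0 ≤ τ) (a b : PiLp 2 (fun _ : ι => E)) :
    τ * ∑ j, ‖rowSoftThreshold τ a j‖ + ‖rowSoftThreshold τ a - a‖ ^ 2 / 2
        + ‖b - rowSoftThreshold τ a‖ ^ 2 / 2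
      ≤ τ * ∑ j, ‖b j‖ + ‖b - a‖ ^ 2 / 2 := by
  simp only [PiLp.norm_sq_eq_of_L2, Finset.mul_sum, Finset.sum_div, ← Finset.sum_add_distrib]
  exact Finset.sum_le_sum fun j _ => softThreshold_prox_le hτ (a j) (b j)

lemma tendsto_zero_of_tendsto_rowSoftThreshold_residual (hτ : 0 < τ)
    (w : PiLp 2 (fun _ : ι => E)) {v : ℕ → PiLp 2 (fun _ : ι => E)} {M : ℝ}
    (hM : ∀ k, ‖v k‖ ≤ M) (hweak : ∀ y, Tendsto (fun k => ⟪v k, y⟫) atTop (nhds 0))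
    (hres : Tendsto (fun k => rowSoftThreshold τ (w + v k) - rowSoftThreshold τ w - v k) atTop
      (nhds 0)) :
    Tendsto v atTop (nhds 0) := by
  classical
  have hrow : ∀ j, Tendsto (fun k => v k j) atTop (nhds 0) := fun j =>
    tendsto_zero_of_tendsto_softThreshold_residual hτ (w j)
      (fun k => (PiLp.norm_apply_le (v k) j).trans (hM k))
      (by simpa [PiLp.inner_apply, PiLp.single_apply, apply_ite, real_inner_comm] using
        hweak (PiLp.single 2 j (w j)))
      (by simpa [Function.comp_def] using ((PiLp.continuous_apply 2 _ j).tendsto 0).comp hres)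
  simpa [Function.comp_def] using
    ((PiLp.continuous_toLp 2 _).tendsto 0).comp (tendsto_pi_nhds.mpr hrow)

end RowSoftThreshold

section HilbertSpace

variable {X Y : Type*} [NormedAddCommGroup X] [InnerProductSpace ℝ X]
  [NormedAddCommGroup Y] [InnerProductSpace ℝ Y]

lemma exists_tendsto_of_norm_sq_le_inner {d v : ℕ → X}
    (hfirm : ∀ k, ‖d (k + 1)‖ ^ 2 ≤ ⟪d (k + 1), v k⟫) (hv : ∀ k, ‖v k‖ ≤ ‖d k‖) :
    ∃ β, Tendsto (fun k => ‖d k‖) atTop (nhds β) ∧ Tendsto (fun k => ‖v k‖) atTop (nhds β) ∧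
      Tendsto (fun k => d (k + 1) - v k) atTop (nhds 0) := by
  have hdv : ∀ k, ‖d (k + 1)‖ ≤ ‖v k‖ := fun k => by
    nlinarith [hfirm k, real_inner_le_norm (d (k + 1)) (v k), norm_nonneg (d (k + 1)),
      norm_nonneg (v k)]
  have hanti : Antitone fun k => ‖d k‖ := antitone_nat_of_succ_le fun k => (hdv k).trans (hv k)
  have hd := tendsto_atTop_ciInf hanti ⟨0, by rintro _ ⟨k, rfl⟩; exact norm_nonneg _⟩
  set β := ⨅ k, ‖d k‖
  have hd' : Tendsto (fun k => ‖d (k + 1)‖) atTop (nhds β) := hd.comp (tendsto_add_atTop_nat 1)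
  have hvβ : Tendsto (fun k => ‖v k‖) atTop (nhds β) :=
    tendsto_of_tendsto_of_tendsto_of_le_of_le hd' hd hdv hv
  refine ⟨β, hd, hvβ, tendsto_zero_iff_norm_tendsto_zero.mpr ?_⟩
  have hsq : ∀ k, ‖d (k + 1) - v k‖ ^ 2 ≤ ‖v k‖ ^ 2 - ‖d (k + 1)‖ ^ 2 := fun k => by
    rw [norm_sub_sq_real]
    linarith [hfirm k]
  have hgap : Tendsto (fun k => ‖v k‖ ^ 2 - ‖d (k + 1)‖ ^ 2) atTop (nhds 0) := by
    simpa using (hvβ.pow 2).sub (hd'.pow 2)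
  simpa using (squeeze_zero (fun k => sq_nonneg _) hsq hgap).sqrt

variable [CompleteSpace X] [CompleteSpace Y]

lemma tendsto_inner_map_of_tendsto_inner {α : Type*} {l : Filter α} {z : α → X}
    (hz : ∀ y, Tendsto (fun k => ⟪z k, y⟫) l (nhds 0)) (T : X →L[ℝ] Y) (y : Y) :
    Tendsto (fun k => ⟪T (z k), y⟫) l (nhds 0) := by
  simpa only [← ContinuousLinearMap.adjoint_inner_right] using hz (T.adjoint y)

lemma sq_norm_apply_le_norm_adjoint_comp_self_mul (A : X →L[ℝ] Y) (y : X) :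
    ‖A y‖ ^ 2 ≤ ‖A.adjoint.comp A‖ * ‖y‖ ^ 2 := by
  rw [ContinuousLinearMap.norm_adjoint_comp_self, ← sq, ← mul_pow]
  exact pow_le_pow_left₀ (norm_nonneg _) (A.le_opNorm y) 2

lemma norm_sub_smul_adjoint_comp_self_le (A : X →L[ℝ] Y) {τ : ℝ} (hτ : 0 ≤ τ)
    (hτA : τ * ‖A.adjoint.comp A‖ ≤ 2) (y : X) :
    ‖y - τ • A.adjoint.comp A y‖ ≤ ‖y‖ := by
  have hinner : ⟪y, A.adjoint.comp A y⟫ = ‖A y‖ ^ 2 := by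
    rw [ContinuousLinearMap.comp_apply, ContinuousLinearMap.adjoint_inner_right,
      real_inner_self_eq_norm_sq]
  have hBy : ‖A.adjoint.comp A y‖ ^ 2 ≤ ‖A.adjoint.comp A‖ * ‖A y‖ ^ 2 := by
    have h := A.adjoint.le_opNorm (A y)
    rw [ContinuousLinearMap.adjoint.norm_map] at h
    rw [ContinuousLinearMap.comp_apply, ContinuousLinearMap.norm_adjoint_comp_self, ← sq,
      ← mul_pow]
    exact pow_le_pow_left₀ (norm_nonneg _) h 2
  rw [← sq_le_sq₀ (norm_nonneg _) (norm_nonneg _), norm_sub_sq_real, real_inner_smul_right,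
    hinner, norm_smul, mul_pow, Real.norm_eq_abs, sq_abs]
  nlinarith [mul_le_mul_of_nonneg_left hBy (sq_nonneg τ),
    mul_le_mul_of_nonneg_right hτA (mul_nonneg hτ (sq_nonneg ‖A y‖))]

lemma prox_step_eq_self_of_forall_le (A : X →L[ℝ] Y) (u : Y) {τ : ℝ} (hτ : 0 < τ)
    (hτA : τ * ‖A.adjoint.comp A‖ < 2) {φ : X → ℝ} {P : X → X}
    (hP : ∀ a b, τ * φ (P a) + ‖P a - a‖ ^ 2 / 2 + ‖b - P a‖ ^ 2 / 2 ≤ τ * φ b + ‖b - a‖ ^ 2 / 2)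
    {xs : X} (hmin : ∀ y, φ xs + ‖A xs - u‖ ^ 2 / 2 ≤ φ y + ‖A y - u‖ ^ 2 / 2) :
    P (xs - τ • A.adjoint (A xs - u)) = xs := by
  obtain ⟨g, hg⟩ : ∃ g, A.adjoint (A xs - u) = g := ⟨_, rfl⟩
  obtain ⟨p, hp⟩ : ∃ p, P (xs - τ • g) = p := ⟨_, rfl⟩
  rw [hg, hp]
  have hprox : τ * φ p + ‖p - xs‖ ^ 2 + τ * ⟪p - xs, g⟫ ≤ τ * φ xs := by
    have h := hP (xs - τ • g) xs
    rw [hp, show p - (xs - τ • g) = (p - xs) + τ • g by abel, sub_sub_cancel, norm_sub_rev xs,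
      norm_add_sq_real, norm_smul, real_inner_smul_right, mul_pow, Real.norm_eq_abs, sq_abs] at h
    linarith
  have hgap : 0 ≤ φ p - φ xs + ⟪p - xs, g⟫ + ‖A (p - xs)‖ ^ 2 / 2 := by
    have h := hmin p
    rw [show A p - u = (A xs - u) + A (p - xs) by rw [map_sub]; abel, norm_add_sq_real,
      ← ContinuousLinearMap.adjoint_inner_left, hg, real_inner_comm] at h
    linarith
  have hA := sq_norm_apply_le_norm_adjoint_comp_self_mul A (p - xs)
  have hd : ‖p - xs‖ ^ 2 ≤ 0 := by
    nlinarith [mul_le_mul_of_nonneg_left hA hτ.le, sq_nonneg ‖p - xs‖]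
  simpa [sub_eq_zero] using hd

end HilbertSpace

/-- Main theorem (strong convergence of forward–backward splitting for joint
sparse recovery): with `H = (ℓ²(Ω))^N`, `0 < τ` and `τ‖A*A‖ < 2`, the iterates
`x^{k+1} = J_τ(x^k - τA*(Ax^k - u))` converge strongly to a minimizer `x*` of
`φ₁ + φ₂` (the set of minimizers being nonempty, and weak convergence to a
minimizer being known). -/
theorem stmt_17 {N m : ℕ}
    (A : PiLp 2 (fun _ : Fin N => H0) →L[ℝ] PiLp 2 (fun _ : Fin m => H0))
    (u : PiLp 2 (fun _ : Fin m => H0))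
    (τ : ℝ) (hτ0 : 0 < τ) (hτ2 : τ * ‖(ContinuousLinearMap.adjoint A).comp A‖ < 2)
    (x : ℕ → PiLp 2 (fun _ : Fin N => H0))
    (hiter : ∀ (k : ℕ) (j : Fin N),
      x (k + 1) j =
        (max (‖(x k - τ • (ContinuousLinearMap.adjoint A) (A (x k) - u)) j‖ - τ) 0 /
            ‖(x k - τ • (ContinuousLinearMap.adjoint A) (A (x k) - u)) j‖) •
          (x k - τ • (ContinuousLinearMap.adjoint A) (A (x k) - u)) j)
    (hweak : ∃ xs : PiLp 2 (fun _ : Fin N => H0),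
      (∀ y : PiLp 2 (fun _ : Fin N => H0),
        (∑ j, ‖xs j‖) + ‖A xs - u‖ ^ 2 / 2 ≤ (∑ j, ‖y j‖) + ‖A y - u‖ ^ 2 / 2) ∧
      ∀ y : PiLp 2 (fun _ : Fin N => H0),
        Tendsto (fun k => ⟪x k, y⟫) atTop (nhds ⟪xs, y⟫)) :
    ∃ xs : PiLp 2 (fun _ : Fin N => H0),
      (∀ y : PiLp 2 (fun _ : Fin N => H0),
        (∑ j, ‖xs j‖) + ‖A xs - u‖ ^ 2 / 2 ≤ (∑ j, ‖y j‖) + ‖A y - u‖ ^ 2 / 2) ∧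
      Tendsto x atTop (nhds xs) := by
  obtain ⟨xs, hmin, hwk⟩ := hweak
  refine ⟨xs, hmin, ?_⟩
  let L := ContinuousLinearMap.id ℝ _ - τ • (ContinuousLinearMap.adjoint A).comp A
  set w := xs - τ • (ContinuousLinearMap.adjoint A) (A xs - u)
  have hfix : rowSoftThreshold τ w = xs :=
    prox_step_eq_self_of_forall_le A u hτ0 hτ2 (φ := fun y => ∑ j, ‖y j‖)
      (rowSoftThreshold_prox_le hτ0.le) hmin
  have hstep : ∀ k,
      x (k + 1) - xs = rowSoftThreshold τ (w + L (x k - xs)) - rowSoftThreshold τ w := by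
    intro k
    have hgrad : x k - τ • (ContinuousLinearMap.adjoint A) (A (x k) - u) = w + L (x k - xs) := by
      simp only [L, w, map_sub, smul_sub, sub_apply, smul_apply, ContinuousLinearMap.id_apply,
        ContinuousLinearMap.comp_apply]
      abel
    rw [hfix, ← hgrad]
    congr 1
    exact PiLp.ext (hiter k)
  obtain ⟨β, hd, hv, hres⟩ := exists_tendsto_of_norm_sq_le_inner (d := fun k => x k - xs)
    (v := fun k => L (x k - xs))
    (fun k => by
      simpa [hstep k] using norm_rowSoftThreshold_sub_sq_le_inner hτ0.le (w + L (x k - xs)) w)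
    (fun k => norm_sub_smul_adjoint_comp_self_le A hτ0.le hτ2.le _)
  obtain ⟨M, hM⟩ := hv.bddAbove_range
  have hweak0 : ∀ y, Tendsto (fun k => ⟪x k - xs, y⟫) atTop (nhds 0) := fun y => by
    simpa [inner_sub_left] using (hwk y).sub_const ⟪xs, y⟫
  have hv0 : Tendsto (fun k => L (x k - xs)) atTop (nhds 0) :=
    tendsto_zero_of_tendsto_rowSoftThreshold_residual hτ0 w (fun k => hM ⟨k, rfl⟩)
      (tendsto_inner_map_of_tendsto_inner hweak0 L) (by simpa [hstep] using hres)
  have hβ : β = 0 := tendsto_nhds_unique hv (by simpa using hv0.norm)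
  rw [tendsto_iff_norm_sub_tendsto_zero]
  exact hβ ▸ hd
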